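/- arXiv:1911.00844 — 2 statements merged into one kernel-verified Lean document; each statement's English description precedes it below -/
import Mathlib

section
/- Consider the distributed recursion x^{ν+1}_{(i)} = Σ_{j=1}^n W_{ij} x^ν_{(j)} − γ^ν y^ν_{(i)} over n agents, where W ∈ ℝ^{n×n} has rows and columns each summing to 1 and is β-contractive on the mean-zero subspace, γ^ν ≥ 0, and each ‖y^ν_{(i)}‖ ≤ B. Then for every ν ≥ 0 the stacked consensus deviation satisfies ‖x^ν − x̄^ν‖ ≤ β^ν ‖x^0 − x̄^0‖ + √n · B · Σ_{k=0}^{ν−1} β^{ν−1−k} γ^k. -/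
/-!
Write `e^ν = x^ν - x̄^ν`. Because `W` fixes constant vectors (row sums `1`) and preserves the sum
of a vector (column sums `1`), the deviation obeys `e^{ν+1} = W e^ν - γ^ν (y^ν - ȳ^ν)`. The vector
`e^ν` has mean zero, so `W` contracts it by `β` in each of the `m` coordinates, hence in the
stacked norm; and removing the mean of `y^ν` is an orthogonal projection, so its stacked norm is
at most `√n B`. This gives `‖e^{ν+1}‖ ≤ β ‖e^ν‖ + √n B γ^ν`, which unrolls to the claim.
-/

open Finset Matrix

theorem le_pow_mul_add_sum_of_le_mul_add {a γ : ℕ → ℝ} {β C : ℝ} (hβ : 0 ≤ β)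
    (ha : ∀ ν, a (ν + 1) ≤ β * a ν + C * γ ν) (ν : ℕ) :
    a ν ≤ β ^ ν * a 0 + C * ∑ k ∈ range ν, β ^ (ν - 1 - k) * γ k := by
  induction ν with
  | zero => simp
  | succ ν ih =>
    have hsum : ∑ k ∈ range (ν + 1), β ^ (ν + 1 - 1 - k) * γ k
        = β * ∑ k ∈ range ν, β ^ (ν - 1 - k) * γ k + γ ν := by
      rw [sum_range_succ, mul_sum, Nat.add_sub_cancel, Nat.sub_self, pow_zero, one_mul]
      congr 1
      refine sum_congr rfl fun k hk => ?_
      rw [← mul_assoc, ← pow_succ']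
      have := mem_range.1 hk
      congr 2
      omega
    calc a (ν + 1) ≤ β * a ν + C * γ ν := ha ν
      _ ≤ β * (β ^ ν * a 0 + C * ∑ k ∈ range ν, β ^ (ν - 1 - k) * γ k) + C * γ ν := by
        gcongr
      _ = _ := by rw [hsum]; ring

theorem sqrt_sum_le_mul_sqrt_sum {κ : Type*} (s : Finset κ) {a b : κ → ℝ} {β : ℝ} (hβ : 0 ≤ β)
    (hb : ∀ c ∈ s, 0 ≤ b c) (h : ∀ c ∈ s, √(a c) ≤ β * √(b c)) :
    √(∑ c ∈ s, a c) ≤ β * √(∑ c ∈ s, b c) := by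
  have hβsqrt (t : ℝ) : β * √t = √(β ^ 2 * t) := by
    rw [Real.sqrt_mul (sq_nonneg β), Real.sqrt_sq hβ]
  rw [hβsqrt, mul_sum]
  refine Real.sqrt_le_sqrt (sum_le_sum fun c hc => ?_)
  rw [← Real.sqrt_le_sqrt_iff (by have := hb c hc; positivity), ← hβsqrt]
  exact h c hc

section StackedNorm

variable {ι E : Type*} [Fintype ι]

noncomputable def stackedNorm [Norm E] (u : ι → E) : ℝ := √(∑ i, ‖u i‖ ^ 2)

theorem stackedNorm_eq_norm_toLp [SeminormedAddCommGroup E] (u : ι → E) :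
    stackedNorm u = ‖WithLp.toLp 2 u‖ :=
  (PiLp.norm_eq_of_L2 _).symm

theorem stackedNorm_sub_le [SeminormedAddCommGroup E] (u v : ι → E) :
    stackedNorm (u - v) ≤ stackedNorm u + stackedNorm v := by
  simpa only [stackedNorm_eq_norm_toLp, WithLp.toLp_sub] using norm_sub_le _ _

theorem stackedNorm_smul [SeminormedAddCommGroup E] [NormedSpace ℝ E] (c : ℝ) (u : ι → E) :
    stackedNorm (c • u) = |c| * stackedNorm u := by
  simp only [stackedNorm_eq_norm_toLp, WithLp.toLp_smul, norm_smul, Real.norm_eq_abs]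

theorem stackedNorm_le_sqrt_card_mul [SeminormedAddCommGroup E] {u : ι → E} {B : ℝ}
    (hB : ∀ i, ‖u i‖ ≤ B) : stackedNorm u ≤ √(Fintype.card ι) * B := by
  rcases isEmpty_or_nonempty ι with hι | ⟨⟨i₀⟩⟩
  · simp [stackedNorm]
  have hB0 : 0 ≤ B := (norm_nonneg _).trans (hB i₀)
  calc stackedNorm u ≤ √(∑ _i : ι, B ^ 2) := by
        unfold stackedNorm
        gcongr with i
        exact hB i
    _ = √(Fintype.card ι) * B := by
        rw [sum_const, card_univ, nsmul_eq_mul, Real.sqrt_mul (Nat.cast_nonneg _),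
          Real.sqrt_sq hB0]

end StackedNorm

section Consensus

variable {ι E : Type*} [Fintype ι]

def mixVec [AddCommMonoid E] [Module ℝ E] (W : Matrix ι ι ℝ) (x : ι → E) : ι → E :=
  fun i => ∑ j, W i j • x j

noncomputable def consensusDeviation [AddCommGroup E] [Module ℝ E] (x : ι → E) : ι → E :=
  fun i => x i - (Fintype.card ι : ℝ)⁻¹ • ∑ k, x k

variable [AddCommGroup E] [Module ℝ E] {W : Matrix ι ι ℝ}

theorem sum_mixVec (hcol : ∀ j, ∑ i, W i j = 1) (x : ι → E) :
    ∑ i, mixVec W x i = ∑ i, x i := by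
  simp only [mixVec]
  rw [sum_comm]
  exact sum_congr rfl fun j _ => by rw [← sum_smul, hcol j, one_smul]

theorem mixVec_sub_const (hrow : ∀ i, ∑ j, W i j = 1) (x : ι → E) (c : E) :
    mixVec W (fun j => x j - c) = fun i => mixVec W x i - c := by
  funext i
  simp only [mixVec, smul_sub, sum_sub_distrib, ← sum_smul, hrow i, one_smul]

theorem sum_consensusDeviation (x : ι → E) : ∑ i, consensusDeviation x i = 0 := by
  rcases isEmpty_or_nonempty ι with hι | hι
  · simp
  have hcard : (Fintype.card ι : ℝ) ≠ 0 := by positivity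
  simp only [consensusDeviation, sum_sub_distrib, sum_const, card_univ, ← Nat.cast_smul_eq_nsmul ℝ,
    smul_smul, mul_inv_cancel₀ hcard, one_smul, sub_self]

theorem consensusDeviation_eq_mixVec_sub (hrow : ∀ i, ∑ j, W i j = 1)
    (hcol : ∀ j, ∑ i, W i j = 1) {x y x' : ι → E} {g : ℝ}
    (hx' : ∀ i, x' i = mixVec W x i - g • y i) :
    consensusDeviation x' = mixVec W (consensusDeviation x) - g • consensusDeviation y := by
  have hsum : ∑ k, x' k = ∑ k, x k - g • ∑ k, y k := by
    simp only [hx', sum_sub_distrib, sum_mixVec hcol, smul_sum]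
  unfold consensusDeviation
  rw [mixVec_sub_const hrow, hsum]
  funext i
  simp only [hx', Pi.sub_apply, Pi.smul_apply]
  module

end Consensus

section Estimates

variable {ι : Type*} [Fintype ι]

theorem stackedNorm_consensusDeviation_le {E : Type*} [NormedAddCommGroup E]
    [InnerProductSpace ℝ E] (x : ι → E) : stackedNorm (consensusDeviation x) ≤ stackedNorm x := by
  set c : E := (Fintype.card ι : ℝ)⁻¹ • ∑ k, x k
  have hx : WithLp.toLp 2 x =
      WithLp.toLp 2 (consensusDeviation x) + WithLp.toLp 2 (fun _ => c) := by
    rw [← WithLp.toLp_add]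
    congr 1
    funext i
    simp [consensusDeviation, c]
  have horth : inner ℝ (WithLp.toLp 2 (consensusDeviation x) : PiLp 2 (fun _ : ι => E))
      (WithLp.toLp 2 (fun _ => c)) = 0 := by
    simp [PiLp.inner_apply, ← sum_inner, sum_consensusDeviation]
  have hpyth := norm_add_sq_eq_norm_sq_add_norm_sq_real horth
  rw [stackedNorm_eq_norm_toLp, stackedNorm_eq_norm_toLp, hx]
  exact (mul_self_le_mul_self_iff (norm_nonneg _) (norm_nonneg _)).2
    (hpyth ▸ le_add_of_nonneg_right (mul_self_nonneg _))

theorem stackedNorm_mixVec_le {κ : Type*} [Fintype κ] {W : Matrix ι ι ℝ} {β : ℝ} (hβ : 0 ≤ β)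
    (hcontr : ∀ v : ι → ℝ, ∑ i, v i = 0 → √(∑ i, (W *ᵥ v) i ^ 2) ≤ β * √(∑ i, v i ^ 2))
    {d : ι → EuclideanSpace ℝ κ} (hd : ∑ i, d i = 0) :
    stackedNorm (mixVec W d) ≤ β * stackedNorm d := by
  have hcoord (u : ι → EuclideanSpace ℝ κ) : ∑ i, ‖u i‖ ^ 2 = ∑ c, ∑ i, u i c ^ 2 := by
    simp only [EuclideanSpace.real_norm_sq_eq]
    exact sum_comm
  have hmix (i : ι) (c : κ) : mixVec W d i c = (W *ᵥ fun j => d j c) i := by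
    simp [mixVec, Matrix.mulVec, dotProduct]
  have hd' (c : κ) : ∑ i, d i c = 0 := by simpa using congrArg (· c) hd
  unfold stackedNorm
  simp only [hcoord, hmix]
  exact sqrt_sum_le_mul_sqrt_sum _ hβ (fun c _ => by positivity) fun c _ => hcontr _ (hd' c)

theorem stackedNorm_consensusDeviation_step_le {κ : Type*} [Fintype κ] {W : Matrix ι ι ℝ}
    {β : ℝ} (hβ : 0 ≤ β) (hrow : ∀ i, ∑ j, W i j = 1) (hcol : ∀ j, ∑ i, W i j = 1)
    (hcontr : ∀ v : ι → ℝ, ∑ i, v i = 0 → √(∑ i, (W *ᵥ v) i ^ 2) ≤ β * √(∑ i, v i ^ 2))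
    {g : ℝ} (hg : 0 ≤ g) {x y x' : ι → EuclideanSpace ℝ κ} {B : ℝ} (hB : ∀ i, ‖y i‖ ≤ B)
    (hx' : ∀ i, x' i = mixVec W x i - g • y i) :
    stackedNorm (consensusDeviation x') ≤
      β * stackedNorm (consensusDeviation x) + √(Fintype.card ι) * B * g := by
  rw [consensusDeviation_eq_mixVec_sub hrow hcol hx']
  calc _ ≤ stackedNorm (mixVec W (consensusDeviation x)) + stackedNorm (g • consensusDeviation y) :=
        stackedNorm_sub_le _ _
    _ ≤ β * stackedNorm (consensusDeviation x) + g * (√(Fintype.card ι) * B) := by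
        rw [stackedNorm_smul, abs_of_nonneg hg]
        gcongr
        · exact stackedNorm_mixVec_le hβ hcontr (sum_consensusDeviation x)
        · exact (stackedNorm_consensusDeviation_le y).trans (stackedNorm_le_sqrt_card_mul hB)
    _ = _ := by ring

end Estimates

/-- Consider the distributed recursion
`x^{ν+1}_{(i)} = ∑ⱼ W_{ij} x^ν_{(j)} − γ^ν y^ν_{(i)}` over `n` agents, where `W` has rows and
columns each summing to `1` and is `β`-contractive on the mean-zero subspace (with
`β = max(|λ₂|,|λₙ|) ≥ 0`), `γ^ν ≥ 0`, and each `‖y^ν_{(i)}‖ ≤ B`.  Then for every `ν ≥ 0`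
the stacked consensus deviation satisfies
`‖x^ν − x̄^ν‖ ≤ β^ν ‖x^0 − x̄^0‖ + √n · B · ∑_{k=0}^{ν−1} β^{ν−1−k} γ^k`. -/
theorem consensus_deviation_geometric_bound
    (n m : ℕ) (W : Matrix (Fin n) (Fin n) ℝ) (β : ℝ) (hβ0 : 0 ≤ β)
    (hrow : ∀ i, ∑ j, W i j = 1)
    (hcol : ∀ j, ∑ i, W i j = 1)
    (hcontr : ∀ v : Fin n → ℝ, (∑ i, v i) = 0 →
      Real.sqrt (∑ i, (W.mulVec v i) ^ 2) ≤ β * Real.sqrt (∑ i, (v i) ^ 2))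
    (γ : ℕ → ℝ) (hγ : ∀ ν, 0 ≤ γ ν)
    (x y : ℕ → Fin n → EuclideanSpace ℝ (Fin m))
    (B : ℝ) (hB : ∀ ν i, ‖y ν i‖ ≤ B)
    (hstep : ∀ ν i, x (ν + 1) i = (∑ j, W i j • x ν j) - γ ν • y ν i) :
    ∀ ν, Real.sqrt (∑ i, ‖x ν i - (n : ℝ)⁻¹ • ∑ k, x ν k‖ ^ 2) ≤
      β ^ ν * Real.sqrt (∑ i, ‖x 0 i - (n : ℝ)⁻¹ • ∑ k, x 0 k‖ ^ 2)
        + Real.sqrt n * B * ∑ k ∈ Finset.range ν, β ^ (ν - 1 - k) * γ k := by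
  have hdev (z : Fin n → EuclideanSpace ℝ (Fin m)) :
      √(∑ i, ‖z i - (n : ℝ)⁻¹ • ∑ k, z k‖ ^ 2) = stackedNorm (consensusDeviation z) := by
    simp only [stackedNorm, consensusDeviation, Fintype.card_fin]
  have hstep_bound (ν : ℕ) :
      stackedNorm (consensusDeviation (x (ν + 1))) ≤
        β * stackedNorm (consensusDeviation (x ν)) + √n * B * γ ν := by
    simpa only [Fintype.card_fin] using
      stackedNorm_consensusDeviation_step_le hβ0 hrow hcol hcontr (hγ ν) (hB ν) (hstep ν)
  simpa only [hdev] using le_pow_mul_add_sum_of_le_mul_add hβ0 hstep_bound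
end

section
/- (Consensus of the distributed stochastic subgradient iterates.) Consider the distributed recursion x^{ν+1}_{(i)} = Σ_{j=1}^n W_{ij} x^ν_{(j)} − γ^ν y^ν_{(i)} over n agents, where W ∈ ℝ^{n×n} has rows and columns each summing to 1 and is β-contractive on the mean-zero subspace with β < 1, where the step sizes satisfy γ^ν ≥ 0 and γ^ν → 0, where every update direction satisfies ‖y^ν_{(i)}‖ ≤ B for a fixed constant B, and with identical initialization x^0_{(1)} = x^0_{(2)} = … = x^0_{(n)}. Then the iterates reach consensus: for every agent i, lim_{ν→∞} ‖x^ν_{(i)} − x̄^ν‖ = 0. -/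
/-!
Let `c u = u - (mean of u) • 1` be the centering of a vector of agent values: it is linear,
annihilates constant vectors and does not increase the `ℓ²` norm. As the rows of `W` sum
to `1`, `W` maps constants to constants, so `c x^{ν+1} = c (W (c x^ν)) - γ^ν • c y^ν`;
contraction of `W` on mean-zero vectors then gives `D^{ν+1} ≤ β D^ν + |γ^ν| √n B` for
`D^ν = ‖c x^ν‖`, and `β < 1`, `γ^ν → 0` force `D^ν → 0`. This is run separately on each
coordinate of `ℝ^m`.
-/

open Filter Finset Topology Matrix

theorem sub_le_pow_mul_sub_of_le_mul_add {β c : ℝ} (hβ : 0 ≤ β) {a : ℕ → ℝ} {N : ℕ}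
    (ha : ∀ k, a (N + k + 1) ≤ β * a (N + k) + (1 - β) * c) (k : ℕ) :
    a (N + k) - c ≤ β ^ k * (a N - c) := by
  induction k with
  | zero => simp
  | succ k ih =>
    calc a (N + k + 1) - c ≤ β * (a (N + k) - c) := by linarith [ha k]
      _ ≤ β * (β ^ k * (a N - c)) := by gcongr
      _ = β ^ (k + 1) * (a N - c) := by ring

theorem tendsto_zero_of_le_mul_add {β : ℝ} (hβ : β < 1) {a b : ℕ → ℝ}
    (ha : ∀ ν, 0 ≤ a ν) (hab : ∀ ν, a (ν + 1) ≤ β * a ν + b ν) (hb : Tendsto b atTop (𝓝 0)) :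
    Tendsto a atTop (𝓝 0) := by
  set β' := max β 0
  have hab' : ∀ ν, a (ν + 1) ≤ β' * a ν + b ν := fun ν =>
    (hab ν).trans (by gcongr; exacts [ha ν, le_max_left β 0])
  refine tendsto_order.2
    ⟨fun e he => .of_forall fun ν => he.trans_le (ha ν), fun ε hε => ?_⟩
  have hβ' : 0 < 1 - β' := sub_pos.2 (max_lt hβ one_pos)
  obtain ⟨N, hN⟩ := eventually_atTop.1 <|
    (tendsto_order.1 hb).2 ((1 - β') * (ε / 2)) (by positivity)
  have hpow := (tendsto_pow_atTop_nhds_zero_of_lt_one (le_max_right β 0)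
    (max_lt hβ one_pos)).mul_const (a N - ε / 2)
  rw [zero_mul] at hpow
  obtain ⟨K, hK⟩ := eventually_atTop.1 <| (tendsto_order.1 hpow).2 (ε / 2) (half_pos hε)
  refine eventually_atTop.2 ⟨N + K, fun ν hν => ?_⟩
  obtain ⟨k, rfl⟩ := Nat.exists_eq_add_of_le (le_of_add_le_left hν)
  have hdecay := sub_le_pow_mul_sub_of_le_mul_add (le_max_right β 0)
    (fun j => (hab' (N + j)).trans (by gcongr; exact (hN (N + j) (by omega)).le)) k
  linarith [hK k (by omega)]

theorem EuclideanSpace.norm_toLp_eq_sqrt_sum_sq {ι : Type*} [Fintype ι] (u : ι → ℝ) :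
    ‖(WithLp.toLp 2 u : EuclideanSpace ℝ ι)‖ = √(∑ i, u i ^ 2) := by
  simp [EuclideanSpace.norm_eq]

theorem EuclideanSpace.norm_toLp_le_of_abs_le {ι : Type*} [Fintype ι] {u : ι → ℝ} {B : ℝ}
    (hu : ∀ i, |u i| ≤ B) :
    ‖(WithLp.toLp 2 u : EuclideanSpace ℝ ι)‖ ≤ √(Fintype.card ι) * B := by
  rcases isEmpty_or_nonempty ι with hι | ⟨⟨i₀⟩⟩
  · simp [Subsingleton.elim u 0]
  have hB : 0 ≤ B := (abs_nonneg _).trans (hu i₀)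
  rw [norm_toLp_eq_sqrt_sum_sq, ← Real.sqrt_sq hB, ← Real.sqrt_mul (Nat.cast_nonneg _)]
  gcongr
  calc ∑ i, u i ^ 2 ≤ ∑ _i : ι, B ^ 2 := by
        exact sum_le_sum fun i _ => sq_le_sq' (abs_le.1 (hu i)).1 (abs_le.1 (hu i)).2
    _ = _ := by simp

namespace Consensus

noncomputable def centering (ι : Type*) [Fintype ι] : (ι → ℝ) →ₗ[ℝ] ι → ℝ where
  toFun u i := u i - (Fintype.card ι : ℝ)⁻¹ * ∑ j, u j
  map_add' u v := by ext i; simp only [Pi.add_apply, sum_add_distrib]; ring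
  map_smul' c u := by
    ext i; simp only [Pi.smul_apply, smul_eq_mul, ← mul_sum, RingHom.id_apply]; ring

variable {ι : Type*} [Fintype ι]

theorem centering_apply (u : ι → ℝ) (i : ι) :
    centering ι u i = u i - (Fintype.card ι : ℝ)⁻¹ * ∑ j, u j := rfl

theorem sum_centering (u : ι → ℝ) : ∑ i, centering ι u i = 0 := by
  rcases isEmpty_or_nonempty ι with hι | hι
  · simp
  simp only [centering_apply, sum_sub_distrib, sum_const, card_univ, nsmul_eq_mul]
  field_simp
  ring

theorem centering_const (c : ℝ) : centering ι (fun _ => c) = 0 := by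
  ext i
  have : Nonempty ι := ⟨i⟩
  have : (Fintype.card ι : ℝ) ≠ 0 := Nat.cast_ne_zero.2 Fintype.card_ne_zero
  simp [centering_apply, this]

theorem sum_sq_centering_add (u : ι → ℝ) :
    ∑ i, centering ι u i ^ 2 + Fintype.card ι * ((Fintype.card ι : ℝ)⁻¹ * ∑ j, u j) ^ 2 =
      ∑ i, u i ^ 2 := by
  rcases isEmpty_or_nonempty ι with hι | hι
  · simp
  simp only [centering_apply, sub_sq, sum_add_distrib, sum_sub_distrib, ← sum_mul, ← mul_sum,
    sum_const, card_univ, nsmul_eq_mul]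
  field_simp
  ring

theorem norm_centering_le (u : ι → ℝ) :
    ‖(WithLp.toLp 2 (centering ι u) : EuclideanSpace ℝ ι)‖ ≤
      ‖(WithLp.toLp 2 u : EuclideanSpace ℝ ι)‖ := by
  simp only [EuclideanSpace.norm_eq, Real.norm_eq_abs, sq_abs]
  refine Real.sqrt_le_sqrt ?_
  rw [← sum_sq_centering_add u]
  exact le_add_of_nonneg_right (by positivity)

theorem centering_mulVec_centering {W : Matrix ι ι ℝ} (hrow : ∀ i, ∑ j, W i j = 1)
    (u : ι → ℝ) : centering ι (W *ᵥ centering ι u) = centering ι (W *ᵥ u) := by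
  have hW : ∀ c : ℝ, W *ᵥ (fun _ => c) = fun _ => c := fun c => by
    ext i; simp [Matrix.mulVec, dotProduct, ← sum_mul, hrow]
  have : centering ι u = u - fun _ => (Fintype.card ι : ℝ)⁻¹ * ∑ j, u j := rfl
  rw [this, Matrix.mulVec_sub, map_sub, hW, centering_const, sub_zero]

theorem tendsto_centering_of_recursion {W : Matrix ι ι ℝ} {β : ℝ} (hβ : β < 1)
    (hrow : ∀ i, ∑ j, W i j = 1)
    (hcontr : ∀ u : ι → ℝ, ∑ i, u i = 0 → ‖(WithLp.toLp 2 (W *ᵥ u) : EuclideanSpace ℝ ι)‖ ≤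
      β * ‖(WithLp.toLp 2 u : EuclideanSpace ℝ ι)‖)
    {γ : ℕ → ℝ} (hγ : Tendsto γ atTop (𝓝 0)) {v z : ℕ → ι → ℝ} {B : ℝ}
    (hz : ∀ ν i, |z ν i| ≤ B) (hstep : ∀ ν, v (ν + 1) = W *ᵥ v ν - γ ν • z ν) :
    Tendsto (fun ν => centering ι (v ν)) atTop (𝓝 0) := by
  let D ν := ‖(WithLp.toLp 2 (centering ι (v ν)) : EuclideanSpace ℝ ι)‖
  have hD : ∀ ν, D (ν + 1) ≤ β * D ν + |γ ν| * (√(Fintype.card ι) * B) := fun ν => by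
    have hcenter : centering ι (v (ν + 1)) =
        centering ι (W *ᵥ centering ι (v ν)) - γ ν • centering ι (z ν) := by
      rw [centering_mulVec_centering hrow, hstep, map_sub, map_smul]
    calc D (ν + 1)
        ≤ ‖(WithLp.toLp 2 (centering ι (W *ᵥ centering ι (v ν))) : EuclideanSpace ℝ ι)‖ +
          |γ ν| * ‖(WithLp.toLp 2 (centering ι (z ν)) : EuclideanSpace ℝ ι)‖ := by
          simp only [D, hcenter, WithLp.toLp_sub, WithLp.toLp_smul]
          exact (norm_sub_le _ _).trans_eq (by rw [norm_smul, Real.norm_eq_abs])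
      _ ≤ β * D ν + |γ ν| * (√(Fintype.card ι) * B) := by
          gcongr
          · exact (norm_centering_le _).trans (hcontr _ (sum_centering _))
          · exact (norm_centering_le _).trans
              (EuclideanSpace.norm_toLp_le_of_abs_le (hz ν))
  have hDlim : Tendsto D atTop (𝓝 0) :=
    tendsto_zero_of_le_mul_add hβ (fun _ => norm_nonneg _) hD
      (by simpa using hγ.abs.mul_const (√(Fintype.card ι) * B))
  exact ((PiLp.continuous_ofLp 2 _).tendsto 0).comp
    (tendsto_zero_iff_norm_tendsto_zero.2 hDlim)

end Consensus

open Consensus in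
theorem distributed_iterates_reach_consensus_general
    (n m : ℕ) (W : Matrix (Fin n) (Fin n) ℝ) (β : ℝ) (hβ1 : β < 1)
    (hrow : ∀ i, ∑ j, W i j = 1)
    (hcontr : ∀ v : Fin n → ℝ, (∑ i, v i) = 0 →
      Real.sqrt (∑ i, (W.mulVec v i) ^ 2) ≤ β * Real.sqrt (∑ i, (v i) ^ 2))
    (γ : ℕ → ℝ)
    (hγ0 : Tendsto γ atTop (nhds 0))
    (x y : ℕ → Fin n → EuclideanSpace ℝ (Fin m))
    (B : ℝ) (hB : ∀ ν i, ‖y ν i‖ ≤ B)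
    (hstep : ∀ ν i, x (ν + 1) i = (∑ j, W i j • x ν j) - γ ν • y ν i) :
    ∀ i, Tendsto (fun ν => ‖x ν i - (n : ℝ)⁻¹ • ∑ k, x ν k‖) atTop (nhds 0) := by
  intro i
  have hcoord (k : Fin m) :
      Tendsto (fun ν => centering (Fin n) (fun a => x ν a k)) atTop (𝓝 0) :=
    tendsto_centering_of_recursion hβ1 hrow
      (fun u hu => by simpa only [EuclideanSpace.norm_toLp_eq_sqrt_sum_sq] using hcontr u hu) hγ0
      (fun ν a => (Real.norm_eq_abs _ ▸ PiLp.norm_apply_le (y ν a) k).trans (hB ν a))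
      (fun ν => by ext a; simp [hstep, Matrix.mulVec, dotProduct])
  have hdev (ν : ℕ) : x ν i - (n : ℝ)⁻¹ • ∑ k, x ν k =
      WithLp.toLp 2 (fun k => centering (Fin n) (fun a => x ν a k) i) := by
    ext k; simp [centering_apply]
  refine tendsto_zero_iff_norm_tendsto_zero.1 ?_
  simp_rw [hdev]
  exact ((PiLp.continuous_toLp 2 _).tendsto 0).comp
    (tendsto_pi_nhds.2 fun k => tendsto_pi_nhds.1 (hcoord k) i)

/-- (Consensus of the distributed stochastic subgradient iterates.)
Consider the distributed recursion `x^{ν+1}_{(i)} = ∑ⱼ W_{ij} x^ν_{(j)} − γ^ν y^ν_{(i)}`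
over `n` agents, where `W` has rows and columns each summing to `1` and is `β`-contractive
on the mean-zero subspace with `β < 1`, the step sizes satisfy `γ^ν ≥ 0` and `γ^ν → 0`,
every update direction satisfies `‖y^ν_{(i)}‖ ≤ B`, and the initialization is identical
across agents.  Then the iterates reach consensus: for every agent `i`,
`lim_{ν→∞} ‖x^ν_{(i)} − x̄^ν‖ = 0`. -/
theorem distributed_iterates_reach_consensus
    (n m : ℕ) (W : Matrix (Fin n) (Fin n) ℝ) (β : ℝ) (hβ1 : β < 1)
    (hrow : ∀ i, ∑ j, W i j = 1)
    (hcol : ∀ j, ∑ i, W i j = 1)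
    (hcontr : ∀ v : Fin n → ℝ, (∑ i, v i) = 0 →
      Real.sqrt (∑ i, (W.mulVec v i) ^ 2) ≤ β * Real.sqrt (∑ i, (v i) ^ 2))
    (γ : ℕ → ℝ) (hγ : ∀ ν, 0 ≤ γ ν)
    (hγ0 : Tendsto γ atTop (nhds 0))
    (x y : ℕ → Fin n → EuclideanSpace ℝ (Fin m))
    (B : ℝ) (hB : ∀ ν i, ‖y ν i‖ ≤ B)
    (hinit : ∀ i j, x 0 i = x 0 j)
    (hstep : ∀ ν i, x (ν + 1) i = (∑ j, W i j • x ν j) - γ ν • y ν i) :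
    ∀ i, Tendsto (fun ν => ‖x ν i - (n : ℝ)⁻¹ • ∑ k, x ν k‖) atTop (nhds 0) :=
  distributed_iterates_reach_consensus_general n m W β hβ1 hrow hcontr γ hγ0 x y B hB hstep
end
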